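/- Let w_j, w_k, w_l, w_m, m_α, m_β be nonzero complex numbers and set A' = (m_β·w_m)/w_j, B' = (m_α·w_k)/w_j, E' = (m_β·w_l)/w_k, C = (w_j·w_l)/(w_m·w_k). Assume ‖B'‖ < 1, ‖E'‖ < 1, ‖C‖ < 1, and that neither A' nor B' is a nonpositive real number. Define f : ℂ → ℂ by f(w) = −Li₂((m_β·w_m)/w_j) − Li₂((m_α·w)/w_j) + Li₂((m_β·w_l)/w) + Li₂((m_α·w_l)/w_m) − Li₂((w_j·w_l)/(w_m·w)) + π²/6 − log((m_β·w_m)/w_j)·log((m_α·w)/w_j). Then f has derivative D at w_k, where D = (1/w_k)·(log(1−B') + log(1−E') − log(1−C) − log A'), and moreover exp(w_k·D) = ((m_α·w_k − w_j)·((1/m_β)·w_k − w_l))/(w_j·w_l − w_k·w_m). -/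

import Mathlib

/-- The dilogarithm, defined by the power series `Li₂(z) = ∑_{n ≥ 1} zⁿ / n²`. -/
noncomputable def Li2 (z : ℂ) : ℂ := ∑' n : ℕ, z ^ (n + 1) / ((n : ℂ) + 1) ^ 2

/-!
Every dilogarithm term of the potential has argument `c * w` or `c / w`, and since
`z Li₂'(z) = -log (1 - z)` on the unit disc, `w d/dw Li₂(c w^{±1}) = ∓log (1 - c w^{±1})`;
the term `log A' · log B'(w)` contributes `log A' / w`. So `w_k D` is the given combination of
logarithms, and exponentiating it yields a rational function of the variables.
-/

open Complex

lemma hasDerivAt_Li2 {z : ℂ} (hz : ‖z‖ < 1) :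
    HasDerivAt Li2 (∑' n : ℕ, z ^ n / ((n : ℂ) + 1)) z := by
  obtain ⟨r, hzr, hr1⟩ := exists_between hz
  have hr0 : 0 < r := (norm_nonneg z).trans_lt hzr
  refine hasDerivAt_tsum_of_isPreconnected (u := fun n : ℕ => r ^ n)
    (g' := fun (n : ℕ) (w : ℂ) => w ^ n / ((n : ℂ) + 1))
    (summable_geometric_of_lt_one hr0.le hr1) Metric.isOpen_ball
    (convex_ball (0 : ℂ) r).isPreconnected (fun n w _ => ?_) (fun n w hw => ?_)
    (Metric.mem_ball_self hr0) (by simp) (mem_ball_zero_iff.mpr hzr)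
  · refine ((hasDerivAt_pow (n + 1) w).div_const (((n : ℂ) + 1) ^ 2)).congr_deriv ?_
    have : (n : ℂ) + 1 ≠ 0 := Nat.cast_add_one_ne_zero n
    push_cast
    field_simp
  · rw [mem_ball_zero_iff] at hw
    calc ‖w ^ n / ((n : ℂ) + 1)‖ = ‖w‖ ^ n / ((n : ℝ) + 1) := by
          rw [norm_div, norm_pow]; norm_cast
      _ ≤ r ^ n / 1 := by gcongr; linarith [(n.cast_nonneg : (0 : ℝ) ≤ n)]
      _ = r ^ n := div_one _

/-- `z Li₂'(z) = -log (1 - z)`. -/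
lemma mul_tsum_pow_div_succ {z : ℂ} (hz : ‖z‖ < 1) :
    z * ∑' n : ℕ, z ^ n / ((n : ℂ) + 1) = -log (1 - z) := by
  rw [← tsum_mul_left, ← (hasSum_taylorSeries_neg_log' hz).tsum_eq]
  simp only [pow_succ', mul_div_assoc]

lemma hasDerivAt_Li2_const_mul {c w : ℂ} (hw : w ≠ 0) (h : ‖c * w‖ < 1) :
    HasDerivAt (fun w => Li2 (c * w)) (-log (1 - c * w) / w) w := by
  refine ((hasDerivAt_Li2 h).comp w ((hasDerivAt_id w).const_mul c)).congr_deriv ?_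
  rw [← mul_tsum_pow_div_succ h]
  field_simp

lemma hasDerivAt_Li2_const_div {c w : ℂ} (hw : w ≠ 0) (h : ‖c / w‖ < 1) :
    HasDerivAt (fun w => Li2 (c / w)) (log (1 - c / w) / w) w := by
  refine ((hasDerivAt_Li2 h).comp w
    ((hasDerivAt_const w c).div (hasDerivAt_id w) hw)).congr_deriv ?_
  rw [← neg_neg (log _), ← mul_tsum_pow_div_succ h]
  field_simp
  ring

lemma hasDerivAt_log_const_mul {c w : ℂ} (h : c * w ∈ slitPlane) :
    HasDerivAt (fun w => log (c * w)) (1 / w) w := by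
  have hcw : c * w ≠ 0 := slitPlane_ne_zero h
  refine ((hasDerivAt_log h).comp w ((hasDerivAt_id w).const_mul c)).congr_deriv ?_
  field_simp [left_ne_zero_of_mul hcw, right_ne_zero_of_mul hcw]

lemma mem_slitPlane_of_forall_ofReal_ne {z : ℂ} (h : ∀ r : ℝ, r ≤ 0 → (r : ℂ) ≠ z) :
    z ∈ slitPlane := by
  rw [mem_slitPlane_iff_not_le_zero, le_def]
  rintro ⟨hre, him⟩
  exact h z.re hre (ext rfl him.symm)

lemma one_sub_ne_zero_of_norm_lt_one {z : ℂ} (hz : ‖z‖ < 1) : 1 - z ≠ 0 := by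
  rw [sub_ne_zero]
  rintro rfl
  simp at hz

theorem crossing_potential_deriv_wk_neg_general
    (wj wk wl wm mα mβ : ℂ)
    (hwj : wj ≠ 0) (hwk : wk ≠ 0) (hwm : wm ≠ 0) (hmβ : mβ ≠ 0)
    (A' B' E' C D : ℂ)
    (hA : A' = (mβ * wm) / wj) (hB : B' = (mα * wk) / wj)
    (hE : E' = (mβ * wl) / wk) (hC : C = (wj * wl) / (wm * wk))
    (hBnorm : ‖B'‖ < 1) (hEnorm : ‖E'‖ < 1) (hCnorm : ‖C‖ < 1)
    (hBreal : ∀ r : ℝ, r ≤ 0 → (r : ℂ) ≠ B')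
    (hD : D = (1 / wk) * (Complex.log (1 - B') + Complex.log (1 - E') - Complex.log (1 - C)
      - Complex.log A')) :
    HasDerivAt (fun w : ℂ =>
      -Li2 ((mβ * wm) / wj) - Li2 ((mα * w) / wj) + Li2 ((mβ * wl) / w) + Li2 ((mα * wl) / wm)
        - Li2 ((wj * wl) / (wm * w)) + (Real.pi : ℂ) ^ 2 / 6
        - Complex.log ((mβ * wm) / wj) * Complex.log ((mα * w) / wj)) D wk ∧
    Complex.exp (wk * D) =
      ((mα * wk - wj) * ((1 / mβ) * wk - wl)) / (wj * wl - wk * wm) := by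
  subst hA hB hE hC hD
  have hLiB := hasDerivAt_Li2_const_mul (c := mα / wj) hwk (by rwa [div_mul_eq_mul_div])
  have hLiE := hasDerivAt_Li2_const_div hwk hEnorm
  have hLiC := hasDerivAt_Li2_const_div (c := wj * wl / wm) hwk (by rwa [div_div])
  have hlogB := hasDerivAt_log_const_mul (c := mα / wj) (w := wk)
    (mem_slitPlane_of_forall_ofReal_ne (by rwa [div_mul_eq_mul_div]))
  simp only [div_mul_eq_mul_div, div_div] at hLiB hLiC hlogB
  constructor
  · refine ((((((hLiB.const_sub _).add hLiE).add_const _).sub hLiC).add_const _).sub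
      (hlogB.const_mul _)).congr_deriv ?_
    ring
  · have h1C := one_sub_ne_zero_of_norm_lt_one hCnorm
    have hCden : wj * wl - wk * wm ≠ 0 := by
      contrapose! h1C
      field_simp
      linear_combination -h1C
    rw [← mul_assoc, mul_one_div_cancel hwk, one_mul, exp_sub, exp_sub, exp_add,
      exp_log (one_sub_ne_zero_of_norm_lt_one hBnorm),
      exp_log (one_sub_ne_zero_of_norm_lt_one hEnorm), exp_log h1C, exp_log (by positivity),
      div_div, div_eq_div_iff (mul_ne_zero h1C (by positivity)) hCden]
    field_simp
    ring

/-- The crossing potential of a negative crossing, viewed as a function of the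
region variable `w_k`, has derivative `D` at `w_k`, and `exp (w_k * D) = τ_{c,k}`. -/
theorem crossing_potential_deriv_wk_neg
    (wj wk wl wm mα mβ : ℂ)
    (hwj : wj ≠ 0) (hwk : wk ≠ 0) (hwl : wl ≠ 0) (hwm : wm ≠ 0)
    (hmα : mα ≠ 0) (hmβ : mβ ≠ 0)
    (A' B' E' C D : ℂ)
    (hA : A' = (mβ * wm) / wj) (hB : B' = (mα * wk) / wj)
    (hE : E' = (mβ * wl) / wk) (hC : C = (wj * wl) / (wm * wk))
    (hBnorm : ‖B'‖ < 1) (hEnorm : ‖E'‖ < 1) (hCnorm : ‖C‖ < 1)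
    (hAreal : ∀ r : ℝ, r ≤ 0 → (r : ℂ) ≠ A')
    (hBreal : ∀ r : ℝ, r ≤ 0 → (r : ℂ) ≠ B')
    (hD : D = (1 / wk) * (Complex.log (1 - B') + Complex.log (1 - E') - Complex.log (1 - C)
      - Complex.log A')) :
    HasDerivAt (fun w : ℂ =>
      -Li2 ((mβ * wm) / wj) - Li2 ((mα * w) / wj) + Li2 ((mβ * wl) / w) + Li2 ((mα * wl) / wm)
        - Li2 ((wj * wl) / (wm * w)) + (Real.pi : ℂ) ^ 2 / 6
        - Complex.log ((mβ * wm) / wj) * Complex.log ((mα * w) / wj)) D wk ∧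
    Complex.exp (wk * D) =
      ((mα * wk - wj) * ((1 / mβ) * wk - wl)) / (wj * wl - wk * wm) :=
  crossing_potential_deriv_wk_neg_general wj wk wl wm mα mβ hwj hwk hwm hmβ A' B' E' C D hA hB hE hC
    hBnorm hEnorm hCnorm hBreal hD
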